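/- arXiv:2411.17940 — 7 statements merged into one kernel-verified Lean document; each statement's English description precedes it below -/
import Mathlib

section
/- The Möbius transformation of J sends i to −i, i.e. J·i = −i; and for every z ∈ ℂ with z ≠ 3i/4 one has |J·z + 3i/4| · |z − 3i/4| = 1/16. Consequently, if |z − 3i/4| > 1/4 then |J·z + 3i/4| < 1/4 (J maps the exterior of the disc of radius 1/4 centred at 3i/4 into the interior of the disc of radius 1/4 centred at −3i/4), and if |z − 3i/4| = 1/4 then |J·z + 3i/4| = 1/4. -/
open Matrix Complex

/-! For `A = [[a, b], [c, d]]` with `det A = 1` and `c ≠ 0`, one has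
`A·z - a/c = -1 / (c² (z + d/c))`, so `‖A·z - a/c‖ · ‖z + d/c‖ = 1/‖c‖²`.
For `J` the centres are `-d/c = 3i/4` and `a/c = -3i/4`, and `‖c‖² = 16`, so distances to the
two centres multiply to `1/16`: the circle of radius `1/4` about `3i/4` goes onto the one about
`-3i/4`, and its exterior into the interior of the image circle. -/

section Mobius

variable {K : Type*} [NormedField K] {a b c d : K}

theorem mobius_sub_div_eq (hdet : a * d - b * c = 1) (hc : c ≠ 0) {z : K} (hz : c * z + d ≠ 0) :
    (a * z + b) / (c * z + d) - a / c = -1 / (c * (c * z + d)) := by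
  rw [div_sub_div _ _ hz hc]
  congr 1
  · linear_combination -hdet
  · ring

theorem norm_mobius_sub_mul_norm_add (hdet : a * d - b * c = 1) (hc : c ≠ 0) {z : K}
    (hz : z + d / c ≠ 0) :
    ‖(a * z + b) / (c * z + d) - a / c‖ * ‖z + d / c‖ = 1 / ‖c‖ ^ 2 := by
  have hpole : c * z + d = c * (z + d / c) := by field_simp
  rw [mobius_sub_div_eq hdet hc (by rw [hpole]; exact mul_ne_zero hc hz), hpole]
  have hw : ‖z + d / c‖ ≠ 0 := norm_ne_zero_iff.mpr hz
  simp only [norm_div, norm_neg, norm_one, norm_mul]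
  generalize ‖z + d / c‖ = t at hw ⊢
  field_simp

end Mobius

theorem lt_of_mul_eq_sq_of_lt {x y r : ℝ} (hxy : x * y = r ^ 2) (hr : 0 < r)
    (hy : r < y) : x < r := by
  nlinarith

/-- The Möbius transformation of J sends i to −i, i.e. J·i = −i; and for
every z ∈ ℂ with z ≠ 3i/4 one has |J·z + 3i/4| · |z − 3i/4| = 1/16. Consequently, if
|z − 3i/4| > 1/4 then |J·z + 3i/4| < 1/4, and if |z − 3i/4| = 1/4 then |J·z + 3i/4| = 1/4. -/
theorem stmt1 :
    let J : Matrix (Fin 2) (Fin 2) ℂ := !![3, -2*I; 4*I, 3]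
    let moeb : ℂ → ℂ := fun z => (J 0 0 * z + J 0 1) / (J 1 0 * z + J 1 1)
    moeb I = -I ∧
    (∀ z : ℂ, z ≠ 3*I/4 →
      ‖moeb z + 3*I/4‖ * ‖z - 3*I/4‖ = 1/16) ∧
    (∀ z : ℂ, ‖z - 3*I/4‖ > 1/4 → ‖moeb z + 3*I/4‖ < 1/4) ∧
    (∀ z : ℂ, ‖z - 3*I/4‖ = 1/4 → ‖moeb z + 3*I/4‖ = 1/4) := by
  intro J moeb
  have hmoeb (z : ℂ) : moeb z = (3 * z + -2 * I) / (4 * I * z + 3) := by simp [moeb, J]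
  have hdet : (3 : ℂ) * 3 - -2 * I * (4 * I) = 1 := by linear_combination 8 * I_mul_I
  have hc : 4 * I ≠ 0 := mul_ne_zero (by norm_num) I_ne_zero
  have hcentre : (3 : ℂ) / (4 * I) = -(3 * I / 4) := by field_simp; linear_combination I_sq
  have hprod (z : ℂ) (hz : z ≠ 3 * I / 4) : ‖moeb z + 3 * I / 4‖ * ‖z - 3 * I / 4‖ = 1 / 16 := by
    have key := norm_mobius_sub_mul_norm_add hdet hc (z := z)
    rw [hcentre, sub_neg_eq_add, ← sub_eq_add_neg, ← hmoeb] at key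
    rw [key (sub_ne_zero.mpr hz), norm_mul, Complex.norm_I]
    norm_num
  have hne {z : ℂ} (hz : 1 / 4 ≤ ‖z - 3 * I / 4‖) : z ≠ 3 * I / 4 := by
    rintro rfl; norm_num at hz
  refine ⟨?_, hprod, fun z hz => ?_, fun z hz => ?_⟩
  · have hden : 4 * I * I + 3 = -1 := by linear_combination 4 * I_mul_I
    rw [hmoeb, hden, div_neg, div_one]
    linear_combination
  · exact lt_of_mul_eq_sq_of_lt (by rw [hprod z (hne hz.le)]; norm_num)
      (by norm_num) hz
  · have h := hprod z (hne hz.ge)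
    rw [hz] at h
    linarith
end

section
/- There exists a matrix Φ ∈ SL(2,ℂ) such that simultaneously Φ(Y₁X⁻¹)Φ⁻¹ = [[−1, 16−4i],[0,−1]], Φ J' Φ⁻¹ = (1/17)·[[−5+20i, 552−32i],[−1+4i, 107−20i]], Φ J Φ⁻¹ = [[3,8],[1,3]], and Φ Y₁ Φ⁻¹ = (1/17)·[[31+12i, 32+76i],[−4−i, 3−12i]]. -/
open Matrix Complex

lemma conj_of_comm {Φ A T : Matrix (Fin 2) (Fin 2) ℂ} (h : Φ.det = 1)
    (he : Φ * A = T * Φ) : Φ * A * Φ⁻¹ = T := by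
  have hu : IsUnit Φ.det := by simp [h]
  rw [he, Matrix.mul_assoc, Matrix.mul_nonsing_inv _ hu, Matrix.mul_one]

/-- There exists a matrix Φ ∈ SL(2,ℂ) such that simultaneously
Φ(Y₁X⁻¹)Φ⁻¹ = [[−1, 16−4i],[0,−1]], Φ J' Φ⁻¹ = (1/17)·[[−5+20i, 552−32i],[−1+4i, 107−20i]],
Φ J Φ⁻¹ = [[3,8],[1,3]], and Φ Y₁ Φ⁻¹ = (1/17)·[[31+12i, 32+76i],[−4−i, 3−12i]]. -/
theorem stmt4 :
    let X : Matrix (Fin 2) (Fin 2) ℂ := !![1, 2; 0, 1]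
    let Y₁ : Matrix (Fin 2) (Fin 2) ℂ := !![1 + 2*I, 2; 2, 1 - 2*I]
    let J : Matrix (Fin 2) (Fin 2) ℂ := !![3, -2*I; 4*I, 3]
    let J' : Matrix (Fin 2) (Fin 2) ℂ := !![3 + 4*I, -6*I; 4*I, 3 - 4*I]
    ∃ Φ : Matrix (Fin 2) (Fin 2) ℂ, Φ.det = 1 ∧
      Φ * (Y₁ * X⁻¹) * Φ⁻¹ = !![-1, 16 - 4*I; 0, -1] ∧
      Φ * J' * Φ⁻¹ = (17 : ℂ)⁻¹ • !![-5 + 20*I, 552 - 32*I; -1 + 4*I, 107 - 20*I] ∧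
      Φ * J * Φ⁻¹ = !![3, 8; 1, 3] ∧
      Φ * Y₁ * Φ⁻¹ = (17 : ℂ)⁻¹ • !![31 + 12*I, 32 + 76*I; -4 - I, 3 - 12*I] := by
  intro X Y₁ J J'
  obtain ⟨s, hs⟩ := IsAlgClosed.exists_pow_nat_eq ((4 + 16*I : ℂ)⁻¹) (n := 2) (by norm_num)
  have h416 : (4 + 16*I : ℂ) ≠ 0 := by
    intro h
    have := congrArg Complex.re h
    simp at this
  set P : Matrix (Fin 2) (Fin 2) ℂ := !![8*I, 2 + 2*I; -1 + I, 2] with hP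
  have hXinv : X⁻¹ = !![1, -2; 0, 1] := by
    have : X * !![1, -2; 0, 1] = 1 := by
      ext i j
      fin_cases i <;> fin_cases j <;>
        simp [X, Matrix.mul_apply, Fin.sum_univ_two, Matrix.one_apply]
    exact inv_eq_right_inv this
  have hdet : (s • P).det = 1 := by
    rw [Matrix.det_smul, hP, Matrix.det_fin_two_of]
    simp only [Fintype.card_fin]
    rw [hs]
    field_simp
    ring_nf
    simp [Complex.I_sq]
    ring
  have key : ∀ A T : Matrix (Fin 2) (Fin 2) ℂ, P * A = T * P →
      (s • P) * A * (s • P)⁻¹ = T := by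
    intro A T hPA
    apply conj_of_comm hdet
    rw [Matrix.smul_mul, Matrix.mul_smul, hPA]
  refine ⟨s • P, hdet, ?_, ?_, ?_, ?_⟩
  · apply key
    rw [hXinv]
    ext i j
    fin_cases i <;> fin_cases j <;>
      · simp [hP, Y₁, Matrix.mul_apply, Fin.sum_univ_two]
        try ring_nf
        try simp [Complex.I_sq]
        try ring
  · apply key
    ext i j
    fin_cases i <;> fin_cases j <;>
      · simp [hP, J', Matrix.mul_apply, Fin.sum_univ_two]
        try ring_nf
        try simp [Complex.I_sq]
        try ring
  · apply key
    ext i j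
    fin_cases i <;> fin_cases j <;>
      · simp [hP, J, Matrix.mul_apply, Fin.sum_univ_two]
        try ring_nf
        try simp [Complex.I_sq]
        try ring
  · apply key
    ext i j
    fin_cases i <;> fin_cases j <;>
      · simp [hP, Y₁, Matrix.mul_apply, Fin.sum_univ_two]
        try ring_nf
        try simp [Complex.I_sq]
        try ring
end

section
/- Each of the matrices P₀ = [[−1, 16−4i],[0,−1]], Q₀ = (1/17)·[[−5+20i, 552−32i],[−1+4i, 107−20i]], M₀ = [[3,8],[1,3]], N₀ = (1/17)·[[31+12i, 32+76i],[−4−i, 3−12i]] has determinant 1, and they satisfy the genus-two surface group relation [P₀,Q₀][M₀,N₀] = I, where [A,B] denotes the commutator ABA⁻¹B⁻¹ and I is the identity matrix. -/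
set_option maxHeartbeats 1000000

open Matrix Complex

/-- Each of the matrices P₀, Q₀, M₀, N₀ has determinant 1, and they satisfy
the genus-two surface group relation [P₀,Q₀][M₀,N₀] = I, where [A,B] = ABA⁻¹B⁻¹. -/
theorem stmt5 :
    let P₀ : Matrix (Fin 2) (Fin 2) ℂ := !![-1, 16 - 4*I; 0, -1]
    let Q₀ : Matrix (Fin 2) (Fin 2) ℂ :=
      (17 : ℂ)⁻¹ • !![-5 + 20*I, 552 - 32*I; -1 + 4*I, 107 - 20*I]
    let M₀ : Matrix (Fin 2) (Fin 2) ℂ := !![3, 8; 1, 3]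
    let N₀ : Matrix (Fin 2) (Fin 2) ℂ :=
      (17 : ℂ)⁻¹ • !![31 + 12*I, 32 + 76*I; -4 - I, 3 - 12*I]
    P₀.det = 1 ∧ Q₀.det = 1 ∧ M₀.det = 1 ∧ N₀.det = 1 ∧
    (P₀ * Q₀ * P₀⁻¹ * Q₀⁻¹) * (M₀ * N₀ * M₀⁻¹ * N₀⁻¹) = 1 := by
  intro P₀ Q₀ M₀ N₀
  have h2 : (I:ℂ)^2 = -1 := I_sq
  have h3 : (I:ℂ)^3 = -I := by rw [pow_succ, h2]; ring
  have h4 : (I:ℂ)^4 = 1 := by rw [pow_succ, h3]; simp [Complex.I_mul_I]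
  have hP : P₀.det = 1 := by simp [P₀, Matrix.det_fin_two_of]
  have hQ : Q₀.det = 1 := by
    simp [Q₀, Matrix.det_fin_two_of, Matrix.smul_apply, smul_eq_mul]
    field_simp
    ring_nf
    simp only [h2]
    ring
  have hM : M₀.det = 1 := by simp [M₀, Matrix.det_fin_two_of]; norm_num
  have hN : N₀.det = 1 := by
    simp [N₀, Matrix.det_fin_two_of, Matrix.smul_apply, smul_eq_mul]
    field_simp
    ring_nf
    simp only [h2]
    ring
  have hPinv : P₀⁻¹ = !![-1, -(16 - 4*I); 0, -1] := by
    apply Matrix.inv_eq_right_inv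
    ext i j
    fin_cases i <;> fin_cases j <;>
      simp [P₀, Matrix.mul_apply, Fin.sum_univ_two, Matrix.one_apply]
  have hQinv : Q₀⁻¹ = (17 : ℂ)⁻¹ • !![107 - 20*I, -(552 - 32*I); 1 - 4*I, -5 + 20*I] := by
    apply Matrix.inv_eq_right_inv
    ext i j
    fin_cases i <;> fin_cases j <;>
      simp [Q₀, Matrix.mul_apply, Fin.sum_univ_two, Matrix.one_apply,
        Matrix.smul_apply, smul_eq_mul] <;>
      field_simp <;> ring_nf <;> simp only [h2] <;> ring
  have hMinv : M₀⁻¹ = !![3, -8; -1, 3] := by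
    apply Matrix.inv_eq_right_inv
    ext i j
    fin_cases i <;> fin_cases j <;>
      simp [M₀, Matrix.mul_apply, Fin.sum_univ_two, Matrix.one_apply] <;> norm_num
  have hNinv : N₀⁻¹ = (17 : ℂ)⁻¹ • !![3 - 12*I, -(32 + 76*I); 4 + I, 31 + 12*I] := by
    apply Matrix.inv_eq_right_inv
    ext i j
    fin_cases i <;> fin_cases j <;>
      simp [N₀, Matrix.mul_apply, Fin.sum_univ_two, Matrix.one_apply,
        Matrix.smul_apply, smul_eq_mul] <;>
      field_simp <;> ring_nf <;> simp only [h2] <;> ring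
  refine ⟨hP, hQ, hM, hN, ?_⟩
  have hC1 : P₀ * Q₀ * P₀⁻¹ * Q₀⁻¹ =
      (17 : ℂ)⁻¹ • !![-175 + 20*I, 688 - 32*I; 16 + 4*I, -63 - 20*I] := by
    rw [hPinv, hQinv]
    ext i j
    fin_cases i <;> fin_cases j <;>
      simp [P₀, Q₀, Matrix.mul_apply, Fin.sum_univ_two,
        Matrix.smul_apply, smul_eq_mul] <;>
      field_simp <;> ring_nf <;> simp only [h2, h3, h4] <;> ring
  have hC2 : M₀ * N₀ * M₀⁻¹ * N₀⁻¹ =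
      (17 : ℂ)⁻¹ • !![-63 - 20*I, -688 + 32*I; -16 - 4*I, -175 + 20*I] := by
    rw [hMinv, hNinv]
    ext i j
    fin_cases i <;> fin_cases j <;>
      simp [M₀, N₀, Matrix.mul_apply, Fin.sum_univ_two,
        Matrix.smul_apply, smul_eq_mul] <;>
      field_simp <;> ring_nf <;> simp only [h2, h3, h4] <;> ring
  rw [hC1, hC2]
  ext i j
  fin_cases i <;> fin_cases j <;>
    simp [Matrix.mul_apply, Fin.sum_univ_two, Matrix.one_apply,
      Matrix.smul_apply, smul_eq_mul] <;>
    field_simp <;> ring_nf <;> simp only [h2, h3, h4] <;> ring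
end

section
/- For every θ ∈ (0, π/2), the Möbius transformation of Y₁(θ) fixes both i and i(1+2tanθ): the relevant denominators are nonzero and Y₁(θ)·i = i and Y₁(θ)·(i(1+2tanθ)) = i(1+2tanθ). -/
open Matrix Complex

/-- For every θ ∈ (0, π/2), the Möbius transformation of Y₁(θ) fixes both
i and i(1+2tanθ): the relevant denominators are nonzero and Y₁(θ)·i = i and
Y₁(θ)·(i(1+2tanθ)) = i(1+2tanθ). -/
theorem stmt12 (θ : ℝ) (hθ : θ ∈ Set.Ioo 0 (Real.pi / 2)) :
    let c2 : ℝ := Real.cos (2 * θ)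
    let s2 : ℝ := Real.sin (2 * θ)
    let Y : Matrix (Fin 2) (Fin 2) ℂ :=
      !![-(c2 : ℂ) + (↑(1 + c2 + s2) : ℂ) * I, (↑(1 + c2 + 2 * s2) : ℂ);
         (↑(s2 * Real.cot θ) : ℂ), -(c2 : ℂ) - (↑(1 + c2 + s2) : ℂ) * I]
    let w : ℂ := (↑(1 + 2 * Real.tan θ) : ℂ) * I
    (Y 1 0 * I + Y 1 1 ≠ 0) ∧
    (Y 0 0 * I + Y 0 1) / (Y 1 0 * I + Y 1 1) = I ∧
    (Y 1 0 * w + Y 1 1 ≠ 0) ∧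
    (Y 0 0 * w + Y 0 1) / (Y 1 0 * w + Y 1 1) = w := by
  obtain ⟨h0, h1⟩ := hθ
  have hs : 0 < Real.sin θ := Real.sin_pos_of_pos_of_lt_pi h0 (by linarith [Real.pi_pos])
  have hc : 0 < Real.cos θ := Real.cos_pos_of_mem_Ioo ⟨by linarith [Real.pi_pos], h1⟩
  have hcot : Real.cot θ = Real.cos θ / Real.sin θ := Real.cot_eq_cos_div_sin θ
  have htan : Real.tan θ = Real.sin θ / Real.cos θ := Real.tan_eq_sin_div_cos θ
  have hc2 : Real.cos (2 * θ) = 2 * Real.cos θ ^ 2 - 1 := Real.cos_two_mul θ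
  have hs2 : Real.sin (2 * θ) = 2 * Real.sin θ * Real.cos θ := Real.sin_two_mul θ
  set s := Real.sin θ
  set c := Real.cos θ
  have hpy : s ^ 2 + c ^ 2 = 1 := Real.sin_sq_add_cos_sq θ
  intro c2 s2 Y w
  simp only [c2, s2, Y, w, Matrix.cons_val', Matrix.cons_val_zero, Matrix.cons_val_one,
    Matrix.head_cons, Matrix.empty_val', Matrix.cons_val_fin_one, Matrix.head_fin_const]
  rw [hcot, htan, hc2, hs2]
  have hs' : s ≠ 0 := ne_of_gt hs
  have hc' : c ≠ 0 := ne_of_gt hc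
  have hsC : (s : ℂ) ≠ 0 := by exact_mod_cast hs'
  have hcC : (c : ℂ) ≠ 0 := by exact_mod_cast hc'
  have hd1 : ((2 * s * c * (c / s) : ℝ) : ℂ) * I + (-((2 * c ^ 2 - 1 : ℝ) : ℂ) -
      ((1 + (2 * c ^ 2 - 1) + 2 * s * c : ℝ) : ℂ) * I)
      = -((2 * c ^ 2 - 1 : ℝ) : ℂ) - ((2 * s * c : ℝ) : ℂ) * I := by
    push_cast
    field_simp
    ring
  have hd2 : ((2 * s * c * (c / s) : ℝ) : ℂ) * (((1 + 2 * (s / c) : ℝ) : ℂ) * I) +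
      (-((2 * c ^ 2 - 1 : ℝ) : ℂ) - ((1 + (2 * c ^ 2 - 1) + 2 * s * c : ℝ) : ℂ) * I)
      = -((2 * c ^ 2 - 1 : ℝ) : ℂ) + ((2 * s * c : ℝ) : ℂ) * I := by
    push_cast
    field_simp
    ring
  have him1 : (-((2 * c ^ 2 - 1 : ℝ) : ℂ) - ((2 * s * c : ℝ) : ℂ) * I).im = -(2 * s * c) := by
    rw [Complex.sub_im, Complex.neg_im, Complex.ofReal_im, Complex.mul_im, Complex.ofReal_im,
      Complex.ofReal_re, Complex.I_im, Complex.I_re]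
    ring
  have him2 : (-((2 * c ^ 2 - 1 : ℝ) : ℂ) + ((2 * s * c : ℝ) : ℂ) * I).im = 2 * s * c := by
    rw [Complex.add_im, Complex.neg_im, Complex.ofReal_im, Complex.mul_im, Complex.ofReal_im,
      Complex.ofReal_re, Complex.I_im, Complex.I_re]
    ring
  have hne1 : ((2 * s * c * (c / s) : ℝ) : ℂ) * I + (-((2 * c ^ 2 - 1 : ℝ) : ℂ) -
      ((1 + (2 * c ^ 2 - 1) + 2 * s * c : ℝ) : ℂ) * I) ≠ 0 := by
    rw [hd1]
    intro h
    have := congrArg Complex.im h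
    rw [him1] at this
    simp at this
    exact this.elim hs' hc'
  have hne2 : ((2 * s * c * (c / s) : ℝ) : ℂ) * (((1 + 2 * (s / c) : ℝ) : ℂ) * I) +
      (-((2 * c ^ 2 - 1 : ℝ) : ℂ) - ((1 + (2 * c ^ 2 - 1) + 2 * s * c : ℝ) : ℂ) * I) ≠ 0 := by
    rw [hd2]
    intro h
    have := congrArg Complex.im h
    rw [him2] at this
    simp at this
    exact this.elim hs' hc'
  refine ⟨hne1, ?_, hne2, ?_⟩
  · simp only [Matrix.cons_val', Matrix.cons_val_zero, Matrix.cons_val_one, Matrix.head_cons,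
      Matrix.empty_val', Matrix.cons_val_fin_one, Matrix.head_fin_const, Matrix.of_apply]
    rw [div_eq_iff hne1, hd1]
    push_cast
    linear_combination (1 + (2 * (c : ℂ) ^ 2 - 1) + 2 * (2 * s * c)) * Complex.I_sq
  · simp only [Matrix.cons_val', Matrix.cons_val_zero, Matrix.cons_val_one, Matrix.head_cons,
      Matrix.empty_val', Matrix.cons_val_fin_one, Matrix.head_fin_const, Matrix.of_apply]
    rw [div_eq_iff hne2, hd2]
    push_cast
    field_simp
    ring_nf
    rw [Complex.I_sq]
    ring_nf
end

section
/- For every θ ∈ (0, π/2), the distance d(θ) = |ζ(θ) + conj(ζ(θ))| between the centres ζ(θ) and −conj(ζ(θ)) of the two circles of common radius r(θ) satisfies d(θ)² = 2·r(θ)²·(1 + cos(4θ)); this is the standard condition expressing that the two circles intersect at angle 4θ. -/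
open Complex

lemma Complex.norm_add_conj_sq (z : ℂ) : ‖z + starRingEnd ℂ z‖ ^ 2 = 4 * z.re ^ 2 := by
  rw [add_conj, norm_real, Real.norm_eq_abs, sq_abs]
  ring

lemma Real.one_add_cos_four_mul (θ : ℝ) : 1 + Real.cos (4 * θ) = 2 * Real.cos (2 * θ) ^ 2 := by
  rw [show 4 * θ = 2 * (2 * θ) by ring, Real.cos_two_mul]
  ring

theorem stmt13_general (θ : ℝ) :
    let t : ℝ := Real.tan θ
    let r : ℝ := t / Real.sin (2 * θ)
    let ζ : ℂ := (↑(-(t * Real.cos (2 * θ) / Real.sin (2 * θ))) : ℂ) + (↑(1 + t) : ℂ) * I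
    let d : ℝ := ‖ζ + starRingEnd ℂ ζ‖
    d ^ 2 = 2 * r ^ 2 * (1 + Real.cos (4 * θ)) := by
  intro t r ζ d
  have hre : ζ.re = -(t * Real.cos (2 * θ) / Real.sin (2 * θ)) := by
    simp only [ζ, add_re, ofReal_re, mul_re, ofReal_im, I_re, I_im]
    ring
  -- Both sides equal 4 t² cos² 2θ / sin² 2θ.
  rw [Complex.norm_add_conj_sq, hre, Real.one_add_cos_four_mul, div_pow]
  ring

/-- For every θ ∈ (0, π/2), the distance d(θ) = |ζ(θ) + conj(ζ(θ))|
between the centres ζ(θ) and −conj(ζ(θ)) of the two circles of common radius r(θ)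
satisfies d(θ)² = 2·r(θ)²·(1 + cos(4θ)), the standard condition expressing that the two
circles intersect at angle 4θ. -/
theorem stmt13 (θ : ℝ) (hθ : θ ∈ Set.Ioo 0 (Real.pi / 2)) :
    let t : ℝ := Real.tan θ
    let r : ℝ := t / Real.sin (2 * θ)
    let ζ : ℂ := (↑(-(t * Real.cos (2 * θ) / Real.sin (2 * θ))) : ℂ) + (↑(1 + t) : ℂ) * I
    let d : ℝ := ‖ζ + starRingEnd ℂ ζ‖
    d ^ 2 = 2 * r ^ 2 * (1 + Real.cos (4 * θ)) :=
  stmt13_general θ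
end

section
/- For every θ ∈ (0, π/2), the lower-left entry c(θ) = sin2θ·cotθ of Y₁(θ) is nonzero, and the isometric circle of Y₁(θ), namely the circle {z ∈ ℂ : |c(θ)z + d(θ)| = 1} where d(θ) is the lower-right entry, is exactly the circle of radius r(θ) centred at −conj(ζ(θ)): that is, −d(θ)/c(θ) = −conj(ζ(θ)) and 1/|c(θ)| = r(θ). -/
open Matrix Complex

/-! With `c = sin 2θ · cot θ = 2 cos² θ`, both claims reduce to the real identities
`tan θ / sin 2θ · 2 cos² θ = 1` and `(1 + tan θ) · 2 cos² θ = 1 + cos 2θ + sin 2θ`. -/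

namespace Real

theorem sin_two_mul_mul_cot {θ : ℝ} (hsin : sin θ ≠ 0) :
    sin (2 * θ) * cot θ = 2 * cos θ ^ 2 := by
  rw [sin_two_mul, cot_eq_cos_div_sin]
  field_simp

theorem tan_div_sin_two_mul_mul_two_mul_cos_sq {θ : ℝ} (hsin : sin θ ≠ 0)
    (hcos : cos θ ≠ 0) :
    tan θ / sin (2 * θ) * (2 * cos θ ^ 2) = 1 := by
  rw [sin_two_mul, tan_eq_sin_div_cos]
  field_simp

theorem one_add_tan_mul_two_mul_cos_sq {θ : ℝ} (hcos : cos θ ≠ 0) :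
    (1 + tan θ) * (2 * cos θ ^ 2) = 1 + cos (2 * θ) + sin (2 * θ) := by
  rw [sin_two_mul, cos_two_mul, tan_eq_sin_div_cos]
  field_simp
  ring

end Real

/-- For every θ ∈ (0, π/2), the lower-left entry c(θ) = sin2θ·cotθ of
Y₁(θ) is nonzero, and the isometric circle of Y₁(θ), namely {z : |c(θ)z + d(θ)| = 1}
where d(θ) is the lower-right entry, is exactly the circle of radius r(θ) centred at
−conj(ζ(θ)): that is, −d(θ)/c(θ) = −conj(ζ(θ)) and 1/|c(θ)| = r(θ). -/
theorem stmt14 (θ : ℝ) (hθ : θ ∈ Set.Ioo 0 (Real.pi / 2)) :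
    let t : ℝ := Real.tan θ
    let r : ℝ := t / Real.sin (2 * θ)
    let ζ : ℂ := (↑(-(t * Real.cos (2 * θ) / Real.sin (2 * θ))) : ℂ) + (↑(1 + t) : ℂ) * I
    let c2 : ℝ := Real.cos (2 * θ)
    let s2 : ℝ := Real.sin (2 * θ)
    let c : ℂ := (↑(s2 * Real.cot θ) : ℂ)
    let d : ℂ := -(c2 : ℂ) - (↑(1 + c2 + s2) : ℂ) * I
    c ≠ 0 ∧ -(d / c) = -(starRingEnd ℂ ζ) ∧ 1 / ‖c‖ = r := by
  intro t r ζ c2 s2 c d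
  obtain ⟨hθ₀, hθ₁⟩ := hθ
  have hsin : Real.sin θ ≠ 0 :=
    (Real.sin_pos_of_pos_of_lt_pi hθ₀ (by linarith [Real.pi_pos])).ne'
  have hcos : 0 < Real.cos θ := Real.cos_pos_of_mem_Ioo ⟨by linarith [Real.pi_pos], hθ₁⟩
  have hc : c = ((2 * Real.cos θ ^ 2 : ℝ) : ℂ) :=
    congrArg ((↑) : ℝ → ℂ) (Real.sin_two_mul_mul_cot hsin)
  have hrc : r * (2 * Real.cos θ ^ 2) = 1 :=
    Real.tan_div_sin_two_mul_mul_two_mul_cos_sq hsin hcos.ne'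
  have hc_pos : 0 < 2 * Real.cos θ ^ 2 := by positivity
  have hc_ne : c ≠ 0 := by rw [hc]; exact_mod_cast hc_pos.ne'
  refine ⟨hc_ne, ?_, ?_⟩
  · have hre : t * c2 / s2 * (2 * Real.cos θ ^ 2) = c2 := by
      rw [mul_div_right_comm, mul_right_comm, hrc, one_mul]
    have him : (1 + t) * (2 * Real.cos θ ^ 2) = 1 + c2 + s2 :=
      Real.one_add_tan_mul_two_mul_cos_sq hcos.ne'
    rw [neg_inj, div_eq_iff hc_ne, hc]
    apply Complex.ext <;>
      simp only [ζ, d, map_add, map_mul, conj_ofReal, conj_I, sub_re, sub_im, neg_re, neg_im,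
        add_re, add_im, mul_re, mul_im, ofReal_re, ofReal_im, I_re, I_im] <;>
      linarith
  · rw [hc, Complex.norm_real, Real.norm_of_nonneg hc_pos.le, one_div, eq_comm]
    exact eq_inv_of_mul_eq_one_left hrc
end

section
/- For every θ ∈ (0, π/2) and every ν ∈ ℝ, the circle with equation x² + y² + B(ν)·y + H(ν) = 0, where B(ν) = −2 + 4(ν−1)tanθ and H(ν) = 1 + 4(1−ν)tanθ + 4(1−ν)tan²θ (a member of the hyperbolic pencil with loci i and i(1+2tanθ)), is orthogonal to the circle of radius r(θ) centred at ζ(θ): explicitly, |ζ(θ) + i·B(ν)/2|² = r(θ)² + (B(ν)²/4 − H(ν)). -/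
/-!
With `t = tan θ` one has `t / sin 2θ = (1 + t²)/2` and `t cos 2θ / sin 2θ = (1 − t²)/2`, so
`ζ = (t² − 1)/2 + i(1 + t)` and `r = (1 + t²)/2`. The orthogonality relation is then a polynomial
identity in `t` and `ν`.
-/

open Complex

namespace Real

variable {θ : ℝ}

theorem tan_div_sin_two_mul (hs : sin θ ≠ 0) (hc : cos θ ≠ 0) :
    tan θ / sin (2 * θ) = (1 + tan θ ^ 2) / 2 := by
  rw [sin_two_mul, tan_eq_sin_div_cos]
  field_simp
  linear_combination -sin_sq_add_cos_sq θ

theorem tan_mul_cos_two_mul_div_sin_two_mul (hs : sin θ ≠ 0) (hc : cos θ ≠ 0) :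
    tan θ * cos (2 * θ) / sin (2 * θ) = (1 - tan θ ^ 2) / 2 := by
  rw [sin_two_mul, cos_two_mul, tan_eq_sin_div_cos]
  field_simp
  linear_combination sin_sq_add_cos_sq θ

end Real

/-- For every θ ∈ (0, π/2) and every ν ∈ ℝ, the circle
x² + y² + B(ν)·y + H(ν) = 0, with B(ν) = −2 + 4(ν−1)tanθ and
H(ν) = 1 + 4(1−ν)tanθ + 4(1−ν)tan²θ (a member of the hyperbolic pencil with loci i and
i(1+2tanθ)), is orthogonal to the circle of radius r(θ) centred at ζ(θ): explicitly,
|ζ(θ) + i·B(ν)/2|² = r(θ)² + (B(ν)²/4 − H(ν)). -/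
theorem stmt17 (θ ν : ℝ) (hθ : θ ∈ Set.Ioo 0 (Real.pi / 2)) :
    let t : ℝ := Real.tan θ
    let B : ℝ := -2 + 4 * (ν - 1) * t
    let H : ℝ := 1 + 4 * (1 - ν) * t + 4 * (1 - ν) * t ^ 2
    let r : ℝ := t / Real.sin (2 * θ)
    let ζ : ℂ := (↑(-(t * Real.cos (2 * θ) / Real.sin (2 * θ))) : ℂ) + (↑(1 + t) : ℂ) * I
    ‖ζ + I * (↑(B / 2) : ℂ)‖ ^ 2 = r ^ 2 + (B ^ 2 / 4 - H) := by
  intro t B H r ζ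
  have hs : Real.sin θ ≠ 0 :=
    (Real.sin_pos_of_pos_of_lt_pi hθ.1 (by linarith [hθ.2, Real.pi_pos])).ne'
  have hc : Real.cos θ ≠ 0 :=
    (Real.cos_pos_of_mem_Ioo ⟨by linarith [hθ.1, Real.pi_pos], hθ.2⟩).ne'
  have hζ : ζ + I * (↑(B / 2) : ℂ) =
      (↑((t ^ 2 - 1) / 2 : ℝ) : ℂ) + (↑(1 + t + B / 2) : ℂ) * I := by
    have hx : t * Real.cos (2 * θ) / Real.sin (2 * θ) = (1 - t ^ 2) / 2 :=
      Real.tan_mul_cos_two_mul_div_sin_two_mul hs hc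
    simp only [ζ, hx]
    push_cast
    ring
  rw [hζ, Complex.sq_norm, normSq_add_mul_I]
  have hr : r = (1 + t ^ 2) / 2 := Real.tan_div_sin_two_mul hs hc
  simp only [hr, B, H]
  ring
end
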